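/- Let G be a symmetric positive definite n×n integer matrix and fix τ ∈ ℍ. Let λ : sh(G) → ℂ satisfy λ(r + x) = exp(πi·xᵀGx)·λ(r) for all r ∈ sh(G) and x ∈ ℤⁿ, and define ϑ_{G,λ}(τ,z) = Σ_{r ∈ sh(G)} λ(r)·exp(πi·τ·rᵀGr + 2πi·rᵀGz) for z ∈ ℂⁿ. If ϑ_{G,λ}(τ,z) = 0 for all z ∈ ℂⁿ, then λ is identically zero. (Equivalently: for fixed τ ∈ ℍ the basic theta functions ϑ_{G,λ}(τ,·), with λ running through a basis of W(G), are linearly independent as functions of z.) -/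

import Mathlib

open Matrix

/-- The shadow of a nondegenerate integral lattice with Gram matrix `G`:
`sh(G) = {r ∈ ℚⁿ : rᵀGx − xᵀGx/2 ∈ ℤ for all x ∈ ℤⁿ}`. -/
def latticeShadow {n : ℕ} (G : Matrix (Fin n) (Fin n) ℤ) : Set (Fin n → ℚ) :=
  {r | ∀ x : Fin n → ℤ, ∃ m : ℤ,
    r ⬝ᵥ (G.map (Int.cast : ℤ → ℚ)).mulVec (fun i => (x i : ℚ))
      - ((fun i => (x i : ℚ)) ⬝ᵥ (G.map (Int.cast : ℤ → ℚ)).mulVec (fun i => (x i : ℚ))) / 2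
      = (m : ℚ)}

/-- The basic theta function `ϑ_{G,λ}(τ,z) = Σ_{r ∈ sh(G)} λ(r)·e(τ·β(r) + β(r,z))`
attached to a coefficient function `λ`. -/
noncomputable def thetaFun {n : ℕ} (G : Matrix (Fin n) (Fin n) ℤ)
    (lam : (Fin n → ℚ) → ℂ) (τ : ℂ) (z : Fin n → ℂ) : ℂ :=
  ∑' r : latticeShadow G,
    lam (r : Fin n → ℚ) *
      Complex.exp ((Real.pi : ℂ) * Complex.I * τ *
          ((((r : Fin n → ℚ) ⬝ᵥ (G.map (Int.cast : ℤ → ℚ)).mulVec (r : Fin n → ℚ)) : ℚ) : ℂ)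
        + 2 * (Real.pi : ℂ) * Complex.I *
          ((fun i => (((r : Fin n → ℚ)) i : ℂ)) ⬝ᵥ (G.map (Int.cast : ℤ → ℂ)).mulVec z))

/-!
On real arguments `z = u` the theta series is `e((r₀ᵀG)·u)` times an absolutely convergent
Fourier series `∑ c_r e(k_r·u)` on `ℝⁿ/ℤⁿ`, with coefficients `c_r = λ(r) e^{πiτ rᵀGr}` and integer
frequencies `k_r = (r - r₀)ᵀG`, pairwise distinct because `det G ≠ 0`. If the theta function
vanishes, integrating against `e(-k_r·u)` over the unit cube shows that every `c_r` vanishes, in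
particular `λ(r₀) = 0`.

Absolute convergence: `|λ|` is invariant under translation by `ℤⁿ`, and the shadow lies in
`(2 det G)⁻¹ ℤⁿ`, so it meets only finitely many classes modulo `ℤⁿ` and `|λ|` is bounded on it;
positive definiteness then gives Gaussian decay of `e^{-π Im τ rᵀGr}` along that lattice.
-/

open MeasureTheory Real Complex

section Fourier

theorem integral_unitInterval_exp_two_pi_I_int_mul (m : ℤ) :
    ∫ t : unitInterval, cexp (2 * π * I * m * t) = if m = 0 then 1 else 0 := by
  rw [unitInterval.measurePreserving_coe.integral_comp unitInterval.measurableEmbedding_coe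
    (fun t : ℝ => cexp (2 * π * I * m * t)), integral_Icc_eq_integral_Ioc,
    ← intervalIntegral.integral_of_le zero_le_one]
  split_ifs with hm
  · simp [hm]
  · have hc : 2 * π * I * m ≠ 0 := by simp [hm, Real.pi_ne_zero, I_ne_zero]
    have hexp : cexp (2 * π * I * m) = 1 := by
      rw [mul_comm]; exact exp_int_mul_two_pi_mul_I m
    simp [integral_exp_mul_complex hc, hexp]

theorem integral_cube_exp_two_pi_I_sum_mul {d : Type*} [Fintype d] (m : d → ℤ) :
    ∫ u : d → unitInterval, cexp (2 * π * I * ∑ i, (m i : ℂ) * ((u i : ℝ) : ℂ)) =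
      if m = 0 then 1 else 0 := by
  simp_rw [Finset.mul_sum, Complex.exp_sum, ← mul_assoc]
  rw [integral_fintype_prod_volume_eq_prod
    (fun i (t : unitInterval) => cexp (2 * π * I * m i * t))]
  simp_rw [integral_unitInterval_exp_two_pi_I_int_mul, Fintype.prod_boole, funext_iff,
    Pi.zero_apply]

theorem eq_zero_of_tsum_mul_exp_eq_zero {d ι : Type*} [Fintype d] [Countable ι]
    {c : ι → ℂ} {k : ι → d → ℤ} (hk : Function.Injective k) (hc : Summable fun j => ‖c j‖)
    (h : ∀ u : d → ℝ, ∑' j, c j * cexp (2 * π * I * ∑ l, (k j l : ℂ) * (u l : ℂ)) = 0)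
    (i : ι) : c i = 0 := by
  -- Integrating the series against `e(-k i · u)` over the unit cube picks out `c i`.
  set F : ι → (d → unitInterval) → ℂ := fun j u =>
    c j * cexp (2 * π * I * ∑ l, ((k j - k i) l : ℂ) * ((u l : ℝ) : ℂ))
  have hF : ∀ j u, F j u = cexp (-(2 * π * I * ∑ l, (k i l : ℂ) * ((u l : ℝ) : ℂ))) *
      (c j * cexp (2 * π * I * ∑ l, (k j l : ℂ) * ((u l : ℝ) : ℂ))) := by
    intro j u
    simp only [F, Pi.sub_apply, Int.cast_sub, sub_mul, Finset.sum_sub_distrib]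
    rw [mul_left_comm, ← Complex.exp_add]
    ring_nf
  have hF_norm : ∀ j u, ‖F j u‖ = ‖c j‖ := by
    intro j u
    simp [F, norm_exp]
  have hF_int : ∀ j, Integrable (F j) := fun j =>
    Integrable.of_bound (by fun_prop) ‖c j‖ (.of_forall fun u => (hF_norm j u).le)
  have hF_sum : Summable fun j => ∫ u, ‖F j u‖ := by
    simpa [hF_norm] using hc
  calc c i = ∑' j, ∫ u, F j u := by
        rw [tsum_eq_single i]
        · rw [integral_const_mul, integral_cube_exp_two_pi_I_sum_mul, sub_self, if_pos rfl,
            mul_one]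
        · intro j hj
          rw [integral_const_mul, integral_cube_exp_two_pi_I_sum_mul,
            if_neg (sub_ne_zero.mpr (hk.ne hj)), mul_zero]
    _ = ∫ u, ∑' j, F j u := integral_tsum_of_summable_integral_norm hF_int hF_sum
    _ = 0 := by simp [hF, tsum_mul_left, h]

end Fourier

section Summability

theorem summable_prod_of_summable {d κ : Type*} [Fintype d] {g : κ → ℝ} (hg0 : ∀ k, 0 ≤ g k)
    (hg : Summable g) : Summable fun w : d → κ => ∏ i, g (w i) := by
  classical
  refine summable_of_sum_le (c := ∏ _i : d, ∑' k, g k)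
    (fun w => Finset.prod_nonneg fun i _ => hg0 (w i)) fun s => ?_
  set t : d → Finset κ := fun i => s.image (· i)
  calc ∑ w ∈ s, ∏ i, g (w i) ≤ ∑ w ∈ Fintype.piFinset t, ∏ i, g (w i) :=
        Finset.sum_le_sum_of_subset_of_nonneg
          (fun w hw => Fintype.mem_piFinset.mpr fun i => Finset.mem_image_of_mem _ hw)
          fun w _ _ => Finset.prod_nonneg fun i _ => hg0 (w i)
    _ = ∏ i, ∑ k ∈ t i, g k := (Finset.prod_univ_sum t fun _ k => g k).symm
    _ ≤ ∏ _i : d, ∑' k, g k :=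
        Finset.prod_le_prod (fun i _ => Finset.sum_nonneg fun k _ => hg0 k)
          fun i _ => hg.sum_le_tsum _ fun k _ => hg0 k

theorem summable_exp_neg_mul_sq_int {b : ℝ} (hb : 0 < b) :
    Summable fun k : ℤ => rexp (-(b * k ^ 2)) := by
  refine (summable_pow_mul_jacobiTheta₂_term_bound 0 (T := b / π) (by positivity) 0).congr
    fun k => ?_
  field_simp
  ring_nf

theorem summable_exp_neg_mul_dotProduct_self {ι : Type*} [Fintype ι] {S : Set (ι → ℚ)}
    {N : ℤ} (hN : N ≠ 0) (hS : ∀ r ∈ S, ∃ w : ι → ℤ, (N : ℚ) • r = fun i => (w i : ℚ))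
    {b : ℝ} (hb : 0 < b) :
    Summable fun r : S => rexp (-(b * (((r : ι → ℚ) ⬝ᵥ r : ℚ) : ℝ))) := by
  choose w hw using fun r : S => hS r r.2
  have hNq : (N : ℚ) ≠ 0 := Int.cast_ne_zero.mpr hN
  have hinj : Function.Injective w := fun r s h =>
    Subtype.ext (smul_right_injective _ hNq (by simp only [hw r, hw s, h]))
  have hsum := (summable_prod_of_summable (fun _ => (exp_pos _).le)
    (summable_exp_neg_mul_sq_int (b := b / (N : ℝ) ^ 2) (by positivity))).comp_injective hinj
  refine hsum.congr fun r => ?_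
  have hwr : ∀ i, (w r i : ℝ) = N * (r : ι → ℚ) i := fun i => by
    exact_mod_cast (congrFun (hw r) i).symm
  simp only [Function.comp_apply, ← Real.exp_sum, hwr, dotProduct, Rat.cast_sum, Rat.cast_mul]
  congr 1
  rw [Finset.mul_sum, ← Finset.sum_neg_distrib]
  refine Finset.sum_congr rfl fun i _ => ?_
  field_simp

theorem bddAbove_image_of_forall_add_intCast_eq {ι : Type*} [Finite ι] {S : Set (ι → ℚ)}
    {N : ℤ} (hN : N ≠ 0) (hS : ∀ r ∈ S, ∃ w : ι → ℤ, (N : ℚ) • r = fun i => (w i : ℚ))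
    {f : (ι → ℚ) → ℝ} (hf : ∀ r ∈ S, ∀ x : ι → ℤ, f (r + fun i => (x i : ℚ)) = f r) :
    BddAbove (f '' S) := by
  -- `f r = f (r - ⌊r⌋)`, and `r - ⌊r⌋` lies in the finite set `Aⁿ` because `N • r ∈ ℤⁿ`.
  set A : Set ℚ := (fun a : ℤ => (a : ℚ) / N) '' Set.Icc (-|N|) |N|
  have hA : (Set.univ.pi fun _ : ι => A).Finite :=
    Set.Finite.pi fun _ => (Set.finite_Icc _ _).image _
  refine (hA.image f).bddAbove.mono ?_
  rintro _ ⟨r, hr, rfl⟩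
  obtain ⟨w, hw⟩ := hS r hr
  refine ⟨r + fun i => ((-⌊r i⌋ : ℤ) : ℚ), fun i _ => ?_, hf r hr _⟩
  have hNq : (N : ℚ) ≠ 0 := Int.cast_ne_zero.mpr hN
  have hwi : (w i : ℚ) - N * ⌊r i⌋ = N * Int.fract (r i) := by
    rw [← congrFun hw i, ← Int.self_sub_floor, Pi.smul_apply, smul_eq_mul]; ring
  refine ⟨w i - N * ⌊r i⌋, abs_le.mp ?_, ?_⟩
  · have : |(N : ℚ) * Int.fract (r i)| ≤ |(N : ℚ)| := by
      rw [abs_mul, abs_of_nonneg (Int.fract_nonneg (r i))]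
      exact mul_le_of_le_one_right (abs_nonneg _) (Int.fract_lt_one _).le
    exact_mod_cast hwi ▸ this
  · push_cast
    rw [hwi, mul_div_cancel_left₀ _ hNq, ← Int.self_sub_floor]
    simp [sub_eq_add_neg]

end Summability

section PositiveDefinite

variable {ι : Type*} [Fintype ι] (M : Matrix ι ι ℝ)

theorem det_ne_zero_of_forall_dotProduct_mulVec_pos [DecidableEq ι]
    (hM : ∀ v : ι → ℝ, v ≠ 0 → 0 < v ⬝ᵥ M *ᵥ v) : M.det ≠ 0 := by
  intro h
  obtain ⟨v, hv, hMv⟩ := exists_mulVec_eq_zero_iff.mpr h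
  have := hM v hv
  rw [hMv, dotProduct_zero] at this
  exact lt_irrefl 0 this

theorem exists_pos_mul_dotProduct_self_le (hM : ∀ v : ι → ℝ, v ≠ 0 → 0 < v ⬝ᵥ M *ᵥ v) :
    ∃ a : ℝ, 0 < a ∧ ∀ v : ι → ℝ, a * (v ⬝ᵥ v) ≤ v ⬝ᵥ M *ᵥ v := by
  rcases isEmpty_or_nonempty ι with hι | hι
  · exact ⟨1, one_pos, fun v => by simp [dotProduct]⟩
  set S : Set (ι → ℝ) := {v | v ⬝ᵥ v = 1}
  have hS : IsCompact S := by
    refine Metric.isCompact_of_isClosed_isBounded (isClosed_eq (by fun_prop) continuous_const)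
      ((Metric.isBounded_closedBall (x := 0) (r := 1)).subset fun v hv => ?_)
    rw [mem_closedBall_zero_iff, pi_norm_le_iff_of_nonneg zero_le_one]
    intro i
    rw [Real.norm_eq_abs, ← sq_le_one_iff_abs_le_one, sq, ← (hv : v ⬝ᵥ v = 1)]
    exact Finset.single_le_sum (f := fun j => v j * v j) (fun j _ => mul_self_nonneg _)
      (Finset.mem_univ i)
  classical
  obtain ⟨v₀, hv₀, hmin⟩ := hS.exists_isMinOn
    ⟨Pi.single (Classical.arbitrary ι) 1, by simp [S]⟩
    (Continuous.continuousOn (f := fun v : ι → ℝ => v ⬝ᵥ M *ᵥ v) (by fun_prop))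
  have hv₀ne : v₀ ≠ 0 := by rintro rfl; simp [S] at hv₀
  refine ⟨v₀ ⬝ᵥ M *ᵥ v₀, hM v₀ hv₀ne, fun v => ?_⟩
  rcases eq_or_ne v 0 with rfl | hv
  · simp
  set t := √(v ⬝ᵥ v)
  have hvv : 0 < v ⬝ᵥ v := (Finset.sum_nonneg fun i _ => mul_self_nonneg (v i)).lt_of_ne
    (Ne.symm (dotProduct_self_eq_zero.not.mpr hv))
  have ht : 0 < t := Real.sqrt_pos.mpr hvv
  have ht2 : t ^ 2 = v ⬝ᵥ v := Real.sq_sqrt hvv.le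
  have hw : t⁻¹ • v ∈ S := by
    simp only [S, Set.mem_ofPred_eq, smul_dotProduct, dotProduct_smul, smul_eq_mul, ← ht2]
    field_simp
  have hle : v₀ ⬝ᵥ M *ᵥ v₀ ≤ (t⁻¹ • v) ⬝ᵥ M *ᵥ (t⁻¹ • v) := hmin hw
  simp only [mulVec_smul, smul_dotProduct, dotProduct_smul, smul_eq_mul] at hle
  rw [← ht2]
  calc (v₀ ⬝ᵥ M *ᵥ v₀) * t ^ 2 ≤ t⁻¹ * (t⁻¹ * (v ⬝ᵥ M *ᵥ v)) * t ^ 2 := by gcongr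
    _ = v ⬝ᵥ M *ᵥ v := by field_simp

end PositiveDefinite

section Shadow

variable {n : ℕ} (G : Matrix (Fin n) (Fin n) ℤ) {r s : Fin n → ℚ}

theorem exists_vecMul_apply_eq_of_mem_latticeShadow (hr : r ∈ latticeShadow G) (i : Fin n) :
    ∃ m : ℤ, (r ᵥ* G.map (Int.cast : ℤ → ℚ)) i = m + (G i i : ℚ) / 2 := by
  obtain ⟨m, hm⟩ := hr (Pi.single i 1)
  refine ⟨m, ?_⟩
  have hsingle : (fun j => ((Pi.single i 1 : Fin n → ℤ) j : ℚ)) = Pi.single i 1 := by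
    ext j; by_cases h : j = i <;> simp [h]
  rw [hsingle, dotProduct_mulVec, dotProduct_single_one, single_one_dotProduct,
    mulVec_single_one] at hm
  simp only [col_apply, map_apply] at hm
  linarith

theorem exists_intCast_eq_sub_vecMul (hr : r ∈ latticeShadow G) (hs : s ∈ latticeShadow G) :
    ∃ k : Fin n → ℤ, (r - s) ᵥ* G.map (Int.cast : ℤ → ℚ) = fun i => (k i : ℚ) := by
  choose a ha using exists_vecMul_apply_eq_of_mem_latticeShadow G hr
  choose b hb using exists_vecMul_apply_eq_of_mem_latticeShadow G hs
  refine ⟨a - b, funext fun i => ?_⟩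
  simp [sub_vecMul, ha, hb]

theorem exists_intCast_eq_two_det_smul (hr : r ∈ latticeShadow G) :
    ∃ w : Fin n → ℤ, ((2 * G.det : ℤ) : ℚ) • r = fun i => (w i : ℚ) := by
  choose m hm using exists_vecMul_apply_eq_of_mem_latticeShadow G hr
  set t : Fin n → ℤ := fun i => 2 * m i + G i i
  have ht : (fun i => (t i : ℚ)) = (2 : ℚ) • (r ᵥ* G.map (Int.cast : ℤ → ℚ)) := by
    ext i
    simp only [t, hm, Int.cast_add, Int.cast_mul, Int.cast_ofNat, Pi.smul_apply, smul_eq_mul]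
    ring
  have hadj : G.adjugate.map (Int.cast : ℤ → ℚ) = (G.map Int.cast).adjugate :=
    RingHom.map_adjugate (Int.castRingHom ℚ) G
  refine ⟨t ᵥ* G.adjugate, ?_⟩
  calc ((2 * G.det : ℤ) : ℚ) • r
      = (2 : ℚ) • (r ᵥ* (G.map (Int.cast : ℤ → ℚ) * (G.map Int.cast).adjugate)) := by
        rw [mul_adjugate, ← Int.cast_det, vecMul_smul, vecMul_one, smul_smul]; push_cast; rfl
    _ = (fun i => (t i : ℚ)) ᵥ* (G.map Int.cast).adjugate := by
        rw [ht, smul_vecMul, vecMul_vecMul]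
    _ = fun i => ((t ᵥ* G.adjugate) i : ℚ) := by
        rw [← hadj]; ext i; exact ((Int.castRingHom ℚ).map_vecMul G.adjugate t i).symm

theorem exists_injective_intCast_eq_sub_vecMul (hdet : G.det ≠ 0) (hs : s ∈ latticeShadow G) :
    ∃ k : latticeShadow G → Fin n → ℤ, Function.Injective k ∧ ∀ r : latticeShadow G,
      ((r : Fin n → ℚ) - s) ᵥ* G.map (Int.cast : ℤ → ℚ) = fun i => (k r i : ℚ) := by
  choose k hk using fun r : latticeShadow G => exists_intCast_eq_sub_vecMul G r.2 hs
  refine ⟨k, fun r r' hrr' => Subtype.ext ?_, hk⟩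
  have hunit : IsUnit (G.map (Int.cast : ℤ → ℚ)) := by
    rw [isUnit_iff_isUnit_det, ← Int.cast_det, isUnit_iff_ne_zero]
    exact Int.cast_ne_zero.mpr hdet
  have h : ((r : Fin n → ℚ) - s) ᵥ* G.map (Int.cast : ℤ → ℚ) =
      ((r' : Fin n → ℚ) - s) ᵥ* G.map (Int.cast : ℤ → ℚ) := by
    rw [hk r, hk r', hrr']
  exact sub_left_injective (vecMul_injective_of_isUnit hunit h)

end Shadow

section Theta

variable {n : ℕ} (G : Matrix (Fin n) (Fin n) ℤ) (lam : (Fin n → ℚ) → ℂ) (τ : ℂ)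

noncomputable def thetaCoeff (r : Fin n → ℚ) : ℂ :=
  lam r * cexp (π * I * τ * ((r ⬝ᵥ (G.map (Int.cast : ℤ → ℚ)).mulVec r : ℚ) : ℂ))

theorem norm_thetaCoeff (r : Fin n → ℚ) :
    ‖thetaCoeff G lam τ r‖ =
      ‖lam r‖ * rexp (-(π * τ.im * ((r ⬝ᵥ (G.map (Int.cast : ℤ → ℚ)).mulVec r : ℚ) : ℝ))) := by
  rw [thetaCoeff, norm_mul, norm_exp]
  congr 2
  simp [mul_re, mul_im]

theorem bddAbove_norm_image_latticeShadow (hdet : G.det ≠ 0)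
    (hlam : ∀ r ∈ latticeShadow G, ∀ x : Fin n → ℤ,
      lam (r + fun i => (x i : ℚ)) =
        cexp (π * I * (((x ⬝ᵥ G.mulVec x) : ℤ) : ℂ)) * lam r) :
    BddAbove ((fun r => ‖lam r‖) '' latticeShadow G) :=
  bddAbove_image_of_forall_add_intCast_eq (mul_ne_zero two_ne_zero hdet)
    (fun _ hr => exists_intCast_eq_two_det_smul G hr) fun r hr x => by
      rw [hlam r hr x, norm_mul, norm_exp]
      simp

theorem summable_norm_thetaCoeff (hdet : G.det ≠ 0)
    (hpos : ∀ v : Fin n → ℝ, v ≠ 0 → 0 < v ⬝ᵥ (G.map (Int.cast : ℤ → ℝ)).mulVec v)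
    (hτ : 0 < τ.im)
    (hlam : ∀ r ∈ latticeShadow G, ∀ x : Fin n → ℤ,
      lam (r + fun i => (x i : ℚ)) =
        cexp (π * I * (((x ⬝ᵥ G.mulVec x) : ℤ) : ℂ)) * lam r) :
    Summable fun r : latticeShadow G => ‖thetaCoeff G lam τ r‖ := by
  obtain ⟨B, hB⟩ := bddAbove_norm_image_latticeShadow G lam hdet hlam
  obtain ⟨a, ha, hQ⟩ := exists_pos_mul_dotProduct_self_le _ hpos
  refine ((summable_exp_neg_mul_dotProduct_self (mul_ne_zero two_ne_zero hdet)
    (fun _ hr => exists_intCast_eq_two_det_smul G hr) (b := π * τ.im * a) (by positivity)).mul_left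
    B).of_nonneg_of_le (fun _ => norm_nonneg _) fun r => ?_
  have hlamB : ‖lam r‖ ≤ B := hB (Set.mem_image_of_mem _ r.2)
  have hQr := hQ fun i => ((r : Fin n → ℚ) i : ℝ)
  rw [norm_thetaCoeff]
  refine mul_le_mul hlamB (exp_le_exp.mpr (neg_le_neg ?_)) (exp_pos _).le
    ((norm_nonneg _).trans hlamB)
  rw [mul_assoc (π * τ.im)]
  refine mul_le_mul_of_nonneg_left ?_ (by positivity)
  push_cast [dotProduct, mulVec] at hQr ⊢
  exact hQr

theorem ratCast_dotProduct_mulVec (v : Fin n → ℚ) (z : Fin n → ℂ) :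
    (fun i => (v i : ℂ)) ⬝ᵥ (G.map (Int.cast : ℤ → ℂ)).mulVec z =
      ∑ l, ((v ᵥ* G.map (Int.cast : ℤ → ℚ)) l : ℂ) * z l := by
  rw [dotProduct_mulVec]
  simp only [dotProduct, vecMul, Matrix.map_apply]
  push_cast
  rfl

theorem thetaFun_ofReal_eq_tsum_mul {r₀ : Fin n → ℚ} (k : latticeShadow G → Fin n → ℤ)
    (hk : ∀ r : latticeShadow G,
      ((r : Fin n → ℚ) - r₀) ᵥ* G.map (Int.cast : ℤ → ℚ) = fun i => (k r i : ℚ))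
    (u : Fin n → ℝ) :
    thetaFun G lam τ (fun i => (u i : ℂ)) =
      (∑' r : latticeShadow G,
        thetaCoeff G lam τ r * cexp (2 * π * I * ∑ l, (k r l : ℂ) * (u l : ℂ))) *
      cexp (2 * π * I * ∑ l, ((r₀ ᵥ* G.map (Int.cast : ℤ → ℚ)) l : ℂ) * (u l : ℂ)) := by
  rw [thetaFun, ← tsum_mul_right]
  refine tsum_congr fun r => ?_
  have hfreq : ∀ l, (((r : Fin n → ℚ) ᵥ* G.map (Int.cast : ℤ → ℚ)) l : ℂ) =
      k r l + ((r₀ ᵥ* G.map (Int.cast : ℤ → ℚ)) l : ℂ) := fun l => by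
    have := congrFun (hk r) l
    rw [sub_vecMul, Pi.sub_apply] at this
    exact_mod_cast (eq_add_of_sub_eq this)
  rw [ratCast_dotProduct_mulVec, thetaCoeff]
  simp only [hfreq, add_mul, Finset.sum_add_distrib, mul_add, Complex.exp_add]
  ring

end Theta

theorem theta_functions_linearly_independent
    {n : ℕ} (G : Matrix (Fin n) (Fin n) ℤ)
    (hpos : ∀ v : Fin n → ℝ, v ≠ 0 → 0 < v ⬝ᵥ (G.map (Int.cast : ℤ → ℝ)).mulVec v)
    (τ : ℂ) (hτ : 0 < τ.im)
    (lam : (Fin n → ℚ) → ℂ)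
    (hlam : ∀ r ∈ latticeShadow G, ∀ x : Fin n → ℤ,
      lam (r + fun i => (x i : ℚ)) =
        Complex.exp ((Real.pi : ℂ) * Complex.I * (((x ⬝ᵥ G.mulVec x) : ℤ) : ℂ)) * lam r)
    (hvanish : ∀ z : Fin n → ℂ, thetaFun G lam τ z = 0) :
    ∀ r ∈ latticeShadow G, lam r = 0 := by
  intro r₀ hr₀
  have hdet : G.det ≠ 0 := (Int.cast_ne_zero (α := ℝ)).mp <| by
    rw [Int.cast_det]; exact det_ne_zero_of_forall_dotProduct_mulVec_pos _ hpos
  obtain ⟨k, hk_inj, hk⟩ := exists_injective_intCast_eq_sub_vecMul G hdet hr₀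
  have hfourier : ∀ u : Fin n → ℝ, ∑' r : latticeShadow G,
      thetaCoeff G lam τ r * cexp (2 * π * I * ∑ l, (k r l : ℂ) * (u l : ℂ)) = 0 := fun u =>
    (mul_eq_zero.mp ((thetaFun_ofReal_eq_tsum_mul G lam τ k hk u).symm.trans
      (hvanish _))).resolve_right (exp_ne_zero _)
  have hc := eq_zero_of_tsum_mul_exp_eq_zero hk_inj
    (summable_norm_thetaCoeff G lam τ hdet hpos hτ hlam) hfourier ⟨r₀, hr₀⟩
  exact (mul_eq_zero.mp hc).resolve_right (exp_ne_zero _)
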